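/- If P ⟹ Q under parallel reduction and the variable x does not occur among the boxed free variables of M, then M[P/x] ⟹ M[Q/x]. -/
import Mathlib


/-- Types of iPCF. -/
inductive Ty : Type where
  | nat | bool
  | arrow : Ty → Ty → Ty
  | box : Ty → Ty
deriving DecidableEq

/-- Terms of iPCF (named variables).  `iop` is a constant `f̃` representing a
fixed intensional operation on closed terms. -/
inductive Tm : Type where
  | var : String → Tm
  | lam : String → Ty → Tm → Tm
  | app : Tm → Tm → Tm
  | box : Tm → Tm
  | letbox : String → Tm → Tm → Tm
  | fix : String → Tm → Tm
  | lit : Nat → Tm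
  | tt | ff
  | succ | pred | iszero
  | cond : Ty → Tm
  | iop : Tm
deriving DecidableEq

/-- Substitution `M[P/x]`. -/
def subst (x : String) (P : Tm) : Tm → Tm
  | .var y => if y = x then P else .var y
  | .lam y A M => if y = x then .lam y A M else .lam y A (subst x P M)
  | .app M N => .app (subst x P M) (subst x P N)
  | .box M => .box (subst x P M)
  | .letbox u M N => .letbox u (subst x P M) (if u = x then N else subst x P N)
  | .fix z M => if z = x then .fix z M else .fix z (subst x P M)
  | M => M

/-- Free variables. -/
def fv : Tm → Finset String
  | .var x => {x}
  | .lam y _ M => fv M \ {y}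
  | .app M N => fv M ∪ fv N
  | .box M => fv M
  | .letbox u M N => fv M ∪ (fv N \ {u})
  | .fix z M => fv M \ {z}
  | _ => ∅

/-- Unboxed free variables: those not under a `box` or `fix`. -/
def ufv : Tm → Finset String
  | .var x => {x}
  | .lam y _ M => ufv M \ {y}
  | .app M N => ufv M ∪ ufv N
  | .box _ => ∅
  | .letbox u M N => ufv M ∪ (ufv N \ {u})
  | .fix _ _ => ∅
  | _ => ∅

/-- Boxed free variables: those occurring under a `box` or `fix`. -/
def bfv : Tm → Finset String
  | .var _ => ∅
  | .lam y _ M => bfv M \ {y}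
  | .app M N => bfv M ∪ bfv N
  | .box M => fv M
  | .letbox u M N => bfv M ∪ (bfv N \ {u})
  | .fix z M => fv M \ {z}
  | _ => ∅

/-- Contexts, written with the most recently added variable at the head;
so the paper's `Γ, x:A, Γ'` is rendered `Γ' ++ (x, A) :: Γ`. -/
abbrev Cx := List (String × Ty)

/-- The variables declared in a context. -/
def varsOf (Γ : Cx) : Finset String := (Γ.map Prod.fst).toFinset

/-- Dual-context typing judgment `Δ; Γ ⊢ M : A` of iPCF. -/
inductive Types : Cx → Cx → Tm → Ty → Prop where
  | var {Δ Γ x A} : (x, A) ∈ Γ → Types Δ Γ (.var x) A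
  | mvar {Δ Γ u A} : (u, A) ∈ Δ → Types Δ Γ (.var u) A
  | lam {Δ Γ x A M B} : Types Δ ((x, A) :: Γ) M B → Types Δ Γ (.lam x A M) (.arrow A B)
  | app {Δ Γ M N A B} : Types Δ Γ M (.arrow A B) → Types Δ Γ N A → Types Δ Γ (.app M N) B
  | box {Δ Γ M A} : Types Δ [] M A → Types Δ Γ (.box M) (.box A)
  | letbox {Δ Γ u M N A C} : Types Δ Γ M (.box A) → Types ((u, A) :: Δ) Γ N C →
      Types Δ Γ (.letbox u M N) C
  | fix {Δ Γ z M A} : Types Δ [(z, .box A)] M A → Types Δ Γ (.fix z M) (.box A)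
  | lit {Δ Γ n} : Types Δ Γ (.lit n) .nat
  | tt {Δ Γ} : Types Δ Γ .tt .bool
  | ff {Δ Γ} : Types Δ Γ .ff .bool
  | succ {Δ Γ} : Types Δ Γ .succ (.arrow .nat .nat)
  | pred {Δ Γ} : Types Δ Γ .pred (.arrow .nat .nat)
  | iszero {Δ Γ} : Types Δ Γ .iszero (.arrow .nat .bool)
  | cond {Δ Γ G} : Types Δ Γ (.cond G) (.arrow .bool (.arrow G (.arrow G G)))

/-- One-step β-reduction of iPCF, parametrised by the intensional
operation `f` on (closed) terms.  There is no congruence rule under `box`. -/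
inductive Red (f : Tm → Tm) : Tm → Tm → Prop where
  | beta {x A M N} : Red f (.app (.lam x A M) N) (subst x N M)
  | boxbeta {u M N} : Red f (.letbox u (.box M) N) (subst u M N)
  | fix {z M} : Red f (.fix z M) (.box (subst z (.fix z M) M))
  | iop {M} : fv M = ∅ → Red f (.app .iop (.box M)) (.box (f M))
  | zeroTrue : Red f (.app .iszero (.lit 0)) .tt
  | zeroFalse {n} : Red f (.app .iszero (.lit (n + 1))) .ff
  | succ {n} : Red f (.app .succ (.lit n)) (.lit (n + 1))
  | pred {n} : Red f (.app .pred (.lit n)) (.lit (n - 1))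
  | condTrue {G M N} : Red f (.app (.app (.app (.cond G) .tt) M) N) M
  | condFalse {G M N} : Red f (.app (.app (.app (.cond G) .ff) M) N) N
  | congLam {x A M N} : Red f M N → Red f (.lam x A M) (.lam x A N)
  | app1 {M N P} : Red f M N → Red f (.app M P) (.app N P)
  | app2 {M P Q} : Red f P Q → Red f (.app M P) (.app M Q)
  | let1 {u M N P} : Red f M N → Red f (.letbox u M P) (.letbox u N P)
  | let2 {u M P Q} : Red f P Q → Red f (.letbox u M P) (.letbox u M Q)

/-- Parallel reduction `⟹` of iPCF (Tait–Martin-Löf style), parametrised by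
the intensional operation `f`.  No congruence under `box`. -/
inductive Par (f : Tm → Tm) : Tm → Tm → Prop where
  | refl {M} : Par f M M
  | congLam {x A M N} : Par f M N → Par f (.lam x A M) (.lam x A N)
  | app {M N P Q} : Par f M N → Par f P Q → Par f (.app M P) (.app N Q)
  | beta {x A M N P Q} : Par f M N → Par f P Q →
      Par f (.app (.lam x A M) P) (subst x Q N)
  | letbox {u M N P Q} : Par f M N → Par f P Q →
      Par f (.letbox u M P) (.letbox u N Q)
  | boxbeta {u M N P} : Par f M N → Par f (.letbox u (.box P) M) (subst u P N)
  | fix {z M} : Par f (.fix z M) (.box (subst z (.fix z M) M))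
  | iop {M} : fv M = ∅ → Par f (.app .iop (.box M)) (.box (f M))
  | condTrue {G M M' N} : Par f M M' →
      Par f (.app (.app (.app (.cond G) .tt) M) N) M'
  | condFalse {G M N N'} : Par f N N' →
      Par f (.app (.app (.app (.cond G) .ff) M) N) N'

/-- The complete development `M*`. -/
def cd (f : Tm → Tm) : Tm → Tm
  | .var x => .var x
  | .lam x A M => .lam x A (cd f M)
  | .app .iop (.box M) => if fv M = ∅ then .box (f M) else .app .iop (.box M)
  | .app (.lam x _ M) N => subst x (cd f N) (cd f M)
  | .app (.app (.app (.cond _) .tt) M) _ => cd f M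
  | .app (.app (.app (.cond _) .ff) _) N => cd f N
  | .app M N => .app (cd f M) (cd f N)
  | .box M => .box M
  | .letbox u (.box M) N => subst u M (cd f N)
  | .letbox u M N => .letbox u (cd f M) (cd f N)
  | .fix z M => .box (subst z (.fix z M) M)
  | M => M


theorem subst_not_free (x : String) (P M : Tm) (hx : x ∉ fv M) :
    subst x P M = M := by
  induction M with
  | var y =>
      simp only [fv, Finset.mem_singleton] at hx
      rw [subst, if_neg (fun h : y = x => hx h.symm)]
  | lam y A M ih =>
      by_cases hy : y = x
      · simp [subst, hy]
      · simp only [fv, Finset.mem_sdiff, Finset.mem_singleton] at hx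
        have : x ∉ fv M := fun h => hx ⟨h, fun e => hy e.symm⟩
        simp [subst, hy, ih this]
  | app M N ihM ihN =>
      simp only [fv, Finset.mem_union] at hx
      push_neg at hx
      simp [subst, ihM hx.1, ihN hx.2]
  | box M ih =>
      simp only [fv] at hx
      simp [subst, ih hx]
  | letbox u M N ihM ihN =>
      simp only [fv, Finset.mem_union, Finset.mem_sdiff, Finset.mem_singleton] at hx
      push_neg at hx
      by_cases hu : u = x
      · simp [subst, hu, ihM hx.1]
      · have : x ∉ fv N := fun h => hu (hx.2 h).symm
        simp [subst, hu, ihM hx.1, ihN this]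
  | fix z M ih =>
      by_cases hz : z = x
      · simp [subst, hz]
      · simp only [fv, Finset.mem_sdiff, Finset.mem_singleton] at hx
        have : x ∉ fv M := fun h => hx ⟨h, fun e => hz e.symm⟩
        simp [subst, hz, ih this]
  | _ => simp [subst]

/-- if `P ⟹ Q` and `x ∉ bfv M`, then `M[P/x] ⟹ M[Q/x]`. -/
theorem par_subst_arg (f : Tm → Tm) (M P Q : Tm) (x : String)
    (h : Par f P Q) (hx : x ∉ bfv M) :
    Par f (subst x P M) (subst x Q M) := by
  induction M with
  | var y =>
      by_cases hy : y = x
      · simpa [subst, hy] using h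
      · simp [subst, hy]; exact Par.refl
  | lam y A M ih =>
      by_cases hy : y = x
      · simp [subst, hy]; exact Par.refl
      · simp only [bfv, Finset.mem_sdiff, Finset.mem_singleton] at hx
        have : x ∉ bfv M := fun hm => hx ⟨hm, fun e => hy e.symm⟩
        simp only [subst, if_neg hy]
        exact Par.congLam (ih this)
  | app M N ihM ihN =>
      simp only [bfv, Finset.mem_union] at hx
      push_neg at hx
      exact Par.app (ihM hx.1) (ihN hx.2)
  | box M ih =>
      simp only [bfv] at hx
      simp [subst, subst_not_free x _ _ hx]
      exact Par.refl
  | letbox u M N ihM ihN =>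
      simp only [bfv, Finset.mem_union, Finset.mem_sdiff, Finset.mem_singleton] at hx
      push_neg at hx
      by_cases hu : u = x
      · simp only [subst, if_pos hu]
        exact Par.letbox (ihM hx.1) Par.refl
      · have : x ∉ bfv N := fun hm => hu (hx.2 hm).symm
        simp only [subst, if_neg hu]
        exact Par.letbox (ihM hx.1) (ihN this)
  | fix z M ih =>
      by_cases hz : z = x
      · simp [subst, hz]; exact Par.refl
      · simp only [bfv, Finset.mem_sdiff, Finset.mem_singleton] at hx
        have : x ∉ fv M := fun hm => hx ⟨hm, fun e => hz e.symm⟩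
        simp [subst, hz, subst_not_free x _ _ this]
        exact Par.refl
  | _ => exact Par.refl
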